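/- Let F be a division ring, R = F[x;σ,δ], and f, g ∈ R non-constant. If h, k ∈ R satisfy Rf ∩ Rg = Rh and Rf + Rg = Rk, then deg(f) + deg(g) = deg(h) + deg(k). -/

import Mathlib

/-!
For `p ≠ 0` the degree is additive on products `r * p`, so every nonzero element of the left
ideal `Rp` has degree at least `deg p`, while `Rp` contains elements of every degree `≥ deg p`.
Leading-term reduction then shows that the monomials `X ^ j`, `j < deg p`, span an `F`-linear
complement of `Rp`, i.e. `Rp` has `F`-codimension `deg p`. The theorem is the codimension identity
`codim (S ⊓ T) + codim (S ⊔ T) = codim S + codim T` applied to `S = Rf` and `T = Rg`.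
-/

variable {F R : Type*}

/-- Degree of a skew polynomial: the sup of the support of its coordinates
in the basis of powers of `X` (degree of `0` is `0` by convention). -/
noncomputable def deg [DivisionRing F] [Ring R] [Module F R]
    (b : Module.Basis ℕ F R) (f : R) : ℕ := (b.repr f).support.sup id

open Module Submodule

theorem Submodule.finrank_quotient_inf_add_finrank_quotient_sup {K V : Type*} [DivisionRing K]
    [AddCommGroup V] [Module K V] (S T : Submodule K V) [FiniteDimensional K (V ⧸ S ⊓ T)] :
    finrank K (V ⧸ S ⊓ T) + finrank K (V ⧸ S ⊔ T) = finrank K (V ⧸ S) + finrank K (V ⧸ T) := by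
  set N := S ⊓ T
  have hS := (quotientQuotientEquivQuotient N S inf_le_left).finrank_eq
  have hT := (quotientQuotientEquivQuotient N T inf_le_right).finrank_eq
  have hST := (quotientQuotientEquivQuotient N (S ⊔ T) (inf_le_left.trans le_sup_left)).finrank_eq
  rw [map_sup] at hST
  have hdisj : map N.mkQ S ⊓ map N.mkQ T = ⊥ := comap_injective_of_surjective N.mkQ_surjective <| by
    rw [comap_inf, comap_map_mkQ, comap_map_mkQ, comap_bot, ker_mkQ, sup_eq_right.2 inf_le_left,
      sup_eq_right.2 inf_le_right]
  have hdim := finrank_sup_add_finrank_inf_eq (map N.mkQ S) (map N.mkQ T)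
  rw [hdisj, finrank_bot] at hdim
  have := finrank_quotient_add_finrank (map N.mkQ S)
  have := finrank_quotient_add_finrank (map N.mkQ T)
  have := finrank_quotient_add_finrank (map N.mkQ S ⊔ map N.mkQ T)
  omega

section Degree

variable [DivisionRing F] [Ring R] [Module F R] (b : Basis ℕ F R) {p : R} {n : ℕ}

theorem deg_le_iff : deg b p ≤ n ↔ ∀ m, n < m → b.repr p m = 0 := by
  rw [deg, Finset.sup_le_iff]
  simp only [id, Finsupp.mem_support_iff]
  exact forall_congr' fun m => by rw [ne_eq, not_imp_comm, not_le]

theorem repr_eq_zero_of_deg_lt (h : deg b p < n) : b.repr p n = 0 :=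
  (deg_le_iff b).1 le_rfl n h

theorem le_deg_of_repr_ne_zero (h : b.repr p n ≠ 0) : n ≤ deg b p :=
  Finset.le_sup (f := id) (Finsupp.mem_support_iff.2 h)

theorem deg_eq_of_repr_ne_zero (h : b.repr p n ≠ 0) (hgt : ∀ m, n < m → b.repr p m = 0) :
    deg b p = n :=
  le_antisymm ((deg_le_iff b).2 hgt) (le_deg_of_repr_ne_zero b h)

theorem repr_deg_ne_zero (hp : p ≠ 0) : b.repr p (deg b p) ≠ 0 := by
  obtain ⟨m, hm, hmax⟩ :=
    Finset.exists_mem_eq_sup _ (Finsupp.support_nonempty_iff.2 (b.repr.map_ne_zero_iff.2 hp)) id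
  rw [deg, hmax]
  exact Finsupp.mem_support_iff.1 hm

theorem ne_zero_of_deg_pos (h : 0 < deg b p) : p ≠ 0 := by
  rintro rfl
  simp [deg] at h

theorem mem_span_image_Iio_iff {x : R} {m : ℕ} :
    x ∈ span F (b '' Set.Iio m) ↔ ∀ n, m ≤ n → b.repr x n = 0 := by
  simp only [b.mem_span_image, Set.subset_def, Finset.mem_coe, Finsupp.mem_support_iff,
    Set.mem_Iio]
  exact forall_congr' fun n => by rw [ne_eq, not_imp_comm, not_lt]

variable {S : Submodule F R} {m : ℕ}

theorem disjoint_span_image_Iio (hS : ∀ s ∈ S, s ≠ 0 → m ≤ deg b s) :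
    Disjoint S (span F (b '' Set.Iio m)) := by
  refine disjoint_def.2 fun x hxS hxW => by_contra fun hx => ?_
  exact repr_deg_ne_zero b hx ((mem_span_image_Iio_iff b).1 hxW _ (hS x hxS hx))

theorem codisjoint_span_image_Iio (hS : ∀ e, m ≤ e → ∃ s ∈ S, s ≠ 0 ∧ deg b s = e) :
    Codisjoint S (span F (b '' Set.Iio m)) := by
  rw [codisjoint_iff, eq_top_iff]
  suffices ∀ e, m ≤ e → ∀ x : R, (∀ n, e ≤ n → b.repr x n = 0) →
      x ∈ S ⊔ span F (b '' Set.Iio m) from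
    fun x _ => this (max m (deg b x + 1)) (le_max_left ..) x
      fun n hn => repr_eq_zero_of_deg_lt b (by omega)
  intro e he
  induction e, he using Nat.le_induction with
  | base => exact fun x hx => mem_sup_right ((mem_span_image_Iio_iff b).2 hx)
  | succ e he ih =>
    intro x hx
    obtain ⟨s, hsS, hs0, rfl⟩ := hS e he
    -- cancel the coefficient of `x` at `deg s` against the leading coefficient of `s`
    set c := b.repr x (deg b s) * (b.repr s (deg b s))⁻¹
    have hq : x - c • s ∈ S ⊔ span F (b '' Set.Iio m) := ih _ fun n hn => by
      rcases hn.eq_or_lt with rfl | hn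
      · simp [c, repr_deg_ne_zero b hs0]
      · simp [hx n hn, repr_eq_zero_of_deg_lt b hn]
    simpa using add_mem hq (mem_sup_left (S.smul_mem c hsS))

theorem finiteDimensional_quotient_of_isCompl (h : IsCompl S (span F (b '' Set.Iio m))) :
    FiniteDimensional F (R ⧸ S) :=
  have := FiniteDimensional.span_of_finite F ((Set.finite_Iio m).image b)
  Module.Finite.equiv (quotientEquivOfIsCompl _ _ h).symm

theorem finrank_quotient_of_isCompl (h : IsCompl S (span F (b '' Set.Iio m))) :
    finrank F (R ⧸ S) = m := by
  classical
  rw [(quotientEquivOfIsCompl _ _ h).finrank_eq,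
    finrank_span_set_eq_card ((b.linearIndepOn (Set.Iio m)).id_image)]
  simp [Set.toFinset_image, Finset.card_image_of_injective _ b.injective]

end Degree

/-- `R` is the skew polynomial ring `F[X; σ, δ]`: `F` acts on `R` by left multiplication through
`i`, and `b` is the basis of powers of `X`. -/
structure IsSkewPolyBasis [DivisionRing F] [Ring R] [Module F R] (σ : F →+* F) (δ : F →+ F)
    (i : F →+* R) (X : R) (b : Basis ℕ F R) : Prop where
  smul_eq_mul : ∀ (a : F) (r : R), a • r = i a * r
  basis_eq : ∀ n, b n = X ^ n
  X_mul : ∀ a : F, X * i a = i (σ a) * X + i (δ a)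

namespace IsSkewPolyBasis

variable [DivisionRing F] [Ring R] [Module F R] {σ : F →+* F} {δ : F →+ F} {i : F →+* R} {X : R}
  {b : Basis ℕ F R} (H : IsSkewPolyBasis σ δ i X b) {p r : R}
include H

theorem smul_mul (a : F) (r s : R) : a • r * s = a • (r * s) := by
  rw [H.smul_eq_mul, H.smul_eq_mul, mul_assoc]

theorem isScalarTower : IsScalarTower F R R :=
  ⟨H.smul_mul⟩

theorem X_mul_smul_basis (a : F) (n : ℕ) : X * (a • b n) = σ a • b (n + 1) + δ a • b n := by
  rw [H.smul_eq_mul, H.smul_eq_mul, H.smul_eq_mul, H.basis_eq, H.basis_eq, ← mul_assoc, H.X_mul,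
    add_mul, mul_assoc, pow_succ']

theorem repr_X_mul_succ (p : R) (t : ℕ) :
    b.repr (X * p) (t + 1) = σ (b.repr p t) + δ (b.repr p (t + 1)) := by
  obtain ⟨l, rfl⟩ := b.repr.symm.surjective p
  induction l using Finsupp.induction_linear with
  | zero => simp
  | add l l' hl hl' =>
    simp only [map_add, mul_add, Finsupp.add_apply, hl, hl']
    abel
  | single n a =>
    rw [b.repr_symm_single, H.X_mul_smul_basis]
    simp only [map_add, map_smul, b.repr_self, Finsupp.add_apply, Finsupp.smul_apply,
      Finsupp.single_apply, Nat.add_right_cancel_iff]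
    split_ifs <;> simp

theorem repr_X_mul_deg_succ (p : R) : b.repr (X * p) (deg b p + 1) = σ (b.repr p (deg b p)) := by
  rw [H.repr_X_mul_succ, repr_eq_zero_of_deg_lt b (Nat.lt_succ_self _), map_zero, add_zero]

theorem X_mul_ne_zero (hp : p ≠ 0) : X * p ≠ 0 := fun h =>
  (map_ne_zero σ).2 (repr_deg_ne_zero b hp) (by rw [← H.repr_X_mul_deg_succ, h, map_zero,
    Finsupp.zero_apply])

theorem deg_X_mul (hp : p ≠ 0) : deg b (X * p) = deg b p + 1 := by
  refine deg_eq_of_repr_ne_zero b ?_ fun m hm => ?_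
  · rw [H.repr_X_mul_deg_succ]
    exact (map_ne_zero σ).2 (repr_deg_ne_zero b hp)
  · obtain ⟨t, rfl⟩ : ∃ t, m = t + 1 := ⟨m - 1, by omega⟩
    rw [H.repr_X_mul_succ, repr_eq_zero_of_deg_lt b (by omega), repr_eq_zero_of_deg_lt b (by omega),
      map_zero, map_zero, add_zero]

theorem X_pow_mul_ne_zero (hp : p ≠ 0) (n : ℕ) : X ^ n * p ≠ 0 := by
  induction n with
  | zero => simpa
  | succ n ih =>
    rw [pow_succ', mul_assoc]
    exact H.X_mul_ne_zero ih

theorem deg_X_pow_mul (hp : p ≠ 0) (n : ℕ) : deg b (X ^ n * p) = deg b p + n := by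
  induction n with
  | zero => simp
  | succ n ih => rw [pow_succ', mul_assoc, H.deg_X_mul (H.X_pow_mul_ne_zero hp n), ih, add_assoc]

theorem repr_mul (r p : R) (t : ℕ) :
    b.repr (r * p) t = ∑ n ∈ (b.repr r).support, b.repr r n * b.repr (X ^ n * p) t := by
  conv_lhs => rw [← b.linearCombination_repr r]
  simp only [Finsupp.linearCombination_apply, Finsupp.sum, Finset.sum_mul, H.smul_mul,
    H.basis_eq, map_sum, map_smul, Finsupp.coe_finsetSum, Finset.sum_apply, Finsupp.smul_apply]
  rfl

theorem deg_mul (hr : r ≠ 0) (hp : p ≠ 0) : deg b (r * p) = deg b r + deg b p := by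
  have hlead : ∀ t, deg b r + deg b p ≤ t →
      b.repr (r * p) t = b.repr r (deg b r) * b.repr (X ^ deg b r * p) t := by
    intro t ht
    rw [H.repr_mul]
    refine Finset.sum_eq_single _ (fun n hn hne => ?_)
      (fun h => by rw [Finsupp.notMem_support_iff.1 h, zero_mul])
    have : n < deg b r := (le_deg_of_repr_ne_zero b (Finsupp.mem_support_iff.1 hn)).lt_of_ne hne
    have : deg b (X ^ n * p) < t := by rw [H.deg_X_pow_mul hp]; omega
    rw [repr_eq_zero_of_deg_lt b this, mul_zero]
  refine deg_eq_of_repr_ne_zero b ?_ fun m hm => ?_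
  · rw [hlead _ le_rfl]
    refine mul_ne_zero (repr_deg_ne_zero b hr) ?_
    have := repr_deg_ne_zero b (H.X_pow_mul_ne_zero hp (deg b r))
    rwa [H.deg_X_pow_mul hp, add_comm] at this
  · have : deg b (X ^ deg b r * p) < m := by rw [H.deg_X_pow_mul hp]; omega
    rw [hlead m hm.le, repr_eq_zero_of_deg_lt b this, mul_zero]

theorem isCompl_restrictScalars_span_singleton [IsScalarTower F R R] (hp : p ≠ 0) :
    IsCompl ((Ideal.span {p}).restrictScalars F) (span F (b '' Set.Iio (deg b p))) := by
  refine ⟨disjoint_span_image_Iio b fun s hs hs0 => ?_, codisjoint_span_image_Iio b fun e he => ?_⟩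
  · obtain ⟨r, rfl⟩ := Ideal.mem_span_singleton'.1 hs
    rw [H.deg_mul (left_ne_zero_of_mul hs0) hp]
    omega
  · refine ⟨X ^ (e - deg b p) * p, Ideal.mul_mem_left _ _ (Ideal.mem_span_singleton_self p),
      H.X_pow_mul_ne_zero hp _, ?_⟩
    rw [H.deg_X_pow_mul hp]
    omega

end IsSkewPolyBasis

theorem deg_add_of_inf_sup_general [DivisionRing F] [Ring R] [Module F R]
    (σ : F →+* F) (δ : F →+ F)
    (i : F →+* R) (X : R)
    (hsmul : ∀ (a : F) (r : R), a • r = i a * r)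
    (b : Module.Basis ℕ F R) (hb : ∀ n : ℕ, b n = X ^ n)
    (hcomm : ∀ a : F, X * i a = i (σ a) * X + i (δ a))
    (f g h k : R) (hf : 0 < deg b f) (hg : 0 < deg b g) (hh : h ≠ 0) (hk : k ≠ 0)
    (hinf : Ideal.span {f} ⊓ Ideal.span {g} = Ideal.span {h})
    (hsup : Ideal.span {f} ⊔ Ideal.span {g} = Ideal.span {k}) :
    deg b f + deg b g = deg b h + deg b k := by
  have H : IsSkewPolyBasis σ δ i X b := ⟨hsmul, hb, hcomm⟩
  have := H.isScalarTower
  have hcompl {p : R} (hp : p ≠ 0) := H.isCompl_restrictScalars_span_singleton hp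
  have : FiniteDimensional F
      (R ⧸ (Ideal.span {f}).restrictScalars F ⊓ (Ideal.span {g}).restrictScalars F) := by
    rw [← restrictScalars_inf, hinf]
    exact finiteDimensional_quotient_of_isCompl b (hcompl hh)
  have key := finrank_quotient_inf_add_finrank_quotient_sup
    ((Ideal.span {f}).restrictScalars F) ((Ideal.span {g}).restrictScalars F)
  rw [← restrictScalars_inf, hinf, ← restrictScalars_sup, hsup,
    finrank_quotient_of_isCompl b (hcompl hh), finrank_quotient_of_isCompl b (hcompl hk),
    finrank_quotient_of_isCompl b (hcompl (ne_zero_of_deg_pos b hf)),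
    finrank_quotient_of_isCompl b (hcompl (ne_zero_of_deg_pos b hg))] at key
  exact key.symm

/-- If `Rf ∩ Rg = Rh` and `Rf + Rg = Rk`, then
`deg f + deg g = deg h + deg k`. -/
theorem deg_add_of_inf_sup [DivisionRing F] [Ring R] [Module F R]
    (σ : F →+* F) (δ : F →+ F)
    (hδ : ∀ a b : F, δ (a * b) = σ a * δ b + δ a * b)
    (i : F →+* R) (X : R)
    (hsmul : ∀ (a : F) (r : R), a • r = i a * r)
    (b : Module.Basis ℕ F R) (hb : ∀ n : ℕ, b n = X ^ n)
    (hcomm : ∀ a : F, X * i a = i (σ a) * X + i (δ a))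
    (f g h k : R) (hf : 0 < deg b f) (hg : 0 < deg b g) (hh : h ≠ 0) (hk : k ≠ 0)
    (hinf : Ideal.span {f} ⊓ Ideal.span {g} = Ideal.span {h})
    (hsup : Ideal.span {f} ⊔ Ideal.span {g} = Ideal.span {k}) :
    deg b f + deg b g = deg b h + deg b k :=
  deg_add_of_inf_sup_general σ δ i X hsmul b hb hcomm f g h k hf hg hh hk hinf hsup
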